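/- arXiv:cs/0205014 — 7 statements merged into one kernel-verified Lean document; each statement's English description precedes it below -/
import Mathlib

section
/- Let A be a partial approximation operator on L^c and let (a,b) ∈ L^c be A-prudent (A-reliable with a ≤ c↓(b)). Then the pair (c↓(b), c↑(a)) is consistent, i.e., c↓(b) ≤ c↑(a). -/
variable {L : Type*} [CompleteLattice L]

/-- The precision ordering on pairs of lattice elements:
`(x, y) ≤ₚ (x', y')` iff `x ≤ x'` and `y' ≤ y`. -/
def precLE (p q : L × L) : Prop := p.1 ≤ q.1 ∧ q.2 ≤ p.2

/-- A pair `(x, y)` is consistent if `x ≤ y`. -/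
def ConsistentPair (p : L × L) : Prop := p.1 ≤ p.2

/-- A partial approximation operator on the consistent pairs `L^c` of a complete
lattice `L`, given by its two component functions `A1`, `A2`.  It maps consistent
pairs to consistent pairs, is `≤ₚ`-monotone on consistent pairs, and has equal
components on the diagonal. -/
structure PartialApprox (L : Type*) [CompleteLattice L] where
  A1 : L → L → L
  A2 : L → L → L
  cons : ∀ x y : L, x ≤ y → A1 x y ≤ A2 x y
  mono1 : ∀ x y x' y' : L, x ≤ y → x' ≤ y' → x ≤ x' → y' ≤ y → A1 x y ≤ A1 x' y'
  mono2 : ∀ x y x' y' : L, x ≤ y → x' ≤ y' → x ≤ x' → y' ≤ y → A2 x' y' ≤ A2 x y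
  diag : ∀ x : L, A1 x x = A2 x x

namespace PartialApprox

/-- `(a, b)` is `A`-reliable if it is consistent and `(a, b) ≤ₚ A(a, b)`. -/
def reliable (A : PartialApprox L) (a b : L) : Prop :=
  a ≤ b ∧ a ≤ A.A1 a b ∧ A.A2 a b ≤ b

/-- The least fixpoint of `A.A1 (·, b)` on the interval `[⊥, b]`
(for `A`-reliable pairs this least fixpoint exists and equals this `sInf`). -/
def cdown (A : PartialApprox L) (b : L) : L :=
  sInf {z | z ≤ b ∧ A.A1 z b = z}

/-- The least fixpoint of `A.A2 (a, ·)` on the interval `[a, ⊤]`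
(for `A`-reliable pairs this least fixpoint exists and equals this `sInf`). -/
def cup (A : PartialApprox L) (a : L) : L :=
  sInf {z | a ≤ z ∧ A.A2 a z = z}

/-- `(a, b)` is `A`-prudent if it is `A`-reliable and `a ≤ c↓(b)`. -/
def prudent (A : PartialApprox L) (a b : L) : Prop :=
  A.reliable a b ∧ a ≤ A.cdown b

/-- `(x, y)` is a stable fixpoint of `A` if it is `A`-reliable, `x = c↓(y)`
and `y = c↑(x)`. -/
def stableFix (A : PartialApprox L) (x y : L) : Prop :=
  A.reliable x y ∧ x = A.cdown y ∧ y = A.cup x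

end PartialApprox

/-! Every fixpoint `z ≥ a` of `A.A2 a` gives the prefixpoint `z ⊓ b` of `A.A2 a` on `[a, b]`.
Through the diagonal this is also a prefixpoint of `A.A1 · b` below `b`, and Knaster–Tarski on
`[⊥, z ⊓ b]` then puts a fixpoint of `A.A1 · b`, hence `c↓(b)`, below `z`. -/

open Set

/-- Knaster–Tarski on the interval `[lo, x]`, which `f` maps into itself. -/
theorem exists_fixed_mem_Icc_of_map_le {α : Type*} [CompleteLattice α] {f : α → α} {lo x : α}
    (hf : MonotoneOn f (Icc lo x)) (hlo : lo ≤ f lo) (hlox : lo ≤ x) (hx : f x ≤ x) :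
    ∃ p ∈ Icc lo x, f p = p := by
  have : Fact (lo ≤ x) := ⟨hlox⟩
  have hmaps : ∀ z ∈ Icc lo x, f z ∈ Icc lo x := fun z hz =>
    ⟨hlo.trans (hf (left_mem_Icc.2 hlox) hz hz.1), (hf hz (right_mem_Icc.2 hlox) hz.2).trans hx⟩
  let g : Icc lo x →o Icc lo x :=
    ⟨fun z => ⟨f z, hmaps z z.2⟩, fun z w hzw => hf z.2 w.2 hzw⟩
  exact ⟨g.lfp, g.lfp.2, congrArg Subtype.val g.map_lfp⟩

namespace PartialApprox

variable (A : PartialApprox L)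

theorem monotoneOn_A1 (b : L) : MonotoneOn (A.A1 · b) (Iic b) :=
  fun _ hx _ hy hxy => A.mono1 _ b _ b hx hy hxy le_rfl

theorem monotoneOn_A2 (a : L) : MonotoneOn (A.A2 a) (Ici a) :=
  fun _ hx _ hy hxy => A.mono2 a _ a _ hy hx le_rfl hxy

theorem cdown_le_of_A1_le {b x : L} (hxb : x ≤ b) (hx : A.A1 x b ≤ x) : A.cdown b ≤ x := by
  obtain ⟨p, hp, hfix⟩ := exists_fixed_mem_Icc_of_map_le
    ((A.monotoneOn_A1 b).mono fun _ hz => hz.2.trans hxb) bot_le bot_le hx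
  calc A.cdown b ≤ p := sInf_le ⟨hp.2.trans hxb, hfix⟩
    _ ≤ x := hp.2

theorem A1_le_of_A2_le {a b x : L} (hax : a ≤ x) (hxb : x ≤ b) (hx : A.A2 a x ≤ x) :
    A.A1 x b ≤ x :=
  calc A.A1 x b ≤ A.A1 x x := A.mono1 x b x x hxb le_rfl le_rfl hxb
    _ = A.A2 x x := A.diag x
    _ ≤ A.A2 a x := A.mono2 a x x x hax le_rfl hax le_rfl
    _ ≤ x := hx

end PartialApprox

theorem stmt5 (A : PartialApprox L) (a b : L) (h : A.prudent a b) :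
    A.cdown b ≤ A.cup a := by
  obtain ⟨⟨hab, -, hA2b⟩, -⟩ := h
  refine le_sInf fun z ⟨haz, hz⟩ => ?_
  have hazb : a ≤ z ⊓ b := le_inf haz hab
  have hmono := A.monotoneOn_A2 a
  have hpre : A.A2 a (z ⊓ b) ≤ z ⊓ b :=
    le_inf ((hmono hazb haz inf_le_left).trans hz.le)
      ((hmono hazb hab inf_le_right).trans hA2b)
  exact (A.cdown_le_of_A1_le inf_le_right (A.A1_le_of_A2_le hazb inf_le_right hpre)).trans
    inf_le_left
end

section
/- Let A be a partial approximation operator on L^c and (a,b) an A-prudent pair. Then the pair (c↓(b), c↑(a)) is A-prudent, i.e., c↓(b) ≤ lfp of A^1(·, c↑(a)). -/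
variable {L : Type*} [CompleteLattice L]

/-!
For a reliable pair `(a, b)`, `A¹(·, b)` is a monotone self-map of `[⊥, b]` and `A²(a, ·)` one of
`[a, ⊤]`, so `c↓(b)` and `c↑(a)` are least fixpoints, below every prefixpoint in their interval.
Put `d = c↑(a)`. Then `d ≤ b`, and `A¹(d, b) ≤ A¹(d, d) = A²(d, d) ≤ A²(a, d) = d` makes `d` a
prefixpoint of `A¹(·, b)`, whence `c↓(b) ≤ d`. Reliability of `(c↓(b), d)` is then monotonicity
of `A`, and `c↓(b) ≤ c↓(d)` because `c↓` is antitone below `b`.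
-/

open Set Function

section LeastFixedPoint

variable {f : L → L} {lo hi : L}

theorem sInf_prefixedPoints_Icc_spec (hmono : MonotoneOn f (Icc lo hi))
    (hmaps : MapsTo f (Icc lo hi) (Icc lo hi)) (hlh : lo ≤ hi) :
    sInf {z ∈ Icc lo hi | f z ≤ z} ∈ Icc lo hi ∧ IsFixedPt f (sInf {z ∈ Icc lo hi | f z ≤ z}) := by
  set p := sInf {z ∈ Icc lo hi | f z ≤ z}
  have hhi : hi ∈ Icc lo hi := ⟨hlh, le_rfl⟩
  have hp : p ∈ Icc lo hi := ⟨le_sInf fun z hz => hz.1.1, sInf_le ⟨hhi, (hmaps hhi).2⟩⟩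
  have hfp : f p ≤ p := le_sInf fun z hz => (hmono hp hz.1 (sInf_le hz)).trans hz.2
  have hpf : p ≤ f p := sInf_le ⟨hmaps hp, hmono (hmaps hp) hp hfp⟩
  exact ⟨hp, le_antisymm hfp hpf⟩

theorem sInf_fixedPoints_Icc_eq (hmono : MonotoneOn f (Icc lo hi))
    (hmaps : MapsTo f (Icc lo hi) (Icc lo hi)) (hlh : lo ≤ hi) :
    sInf {z ∈ Icc lo hi | f z = z} = sInf {z ∈ Icc lo hi | f z ≤ z} :=
  have hspec := sInf_prefixedPoints_Icc_spec hmono hmaps hlh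
  le_antisymm (sInf_le hspec) (sInf_le_sInf fun _ hz => ⟨hz.1, hz.2.le⟩)

end LeastFixedPoint

namespace PartialApprox

variable (A : PartialApprox L) {a b d z : L}

theorem monotoneOn_A1_left (b : L) : MonotoneOn (A.A1 · b) (Icc ⊥ b) :=
  fun x hx y hy hxy => A.mono1 x b y b hx.2 hy.2 hxy le_rfl

theorem monotoneOn_A2_right (a : L) : MonotoneOn (A.A2 a) (Icc a ⊤) :=
  fun _ hx _ hy hxy => A.mono2 a _ a _ hy.1 hx.1 le_rfl hxy

theorem mapsTo_A1_left (hb : A.A1 b b ≤ b) : MapsTo (A.A1 · b) (Icc ⊥ b) (Icc ⊥ b) :=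
  fun _ hx => ⟨bot_le, (A.monotoneOn_A1_left b hx ⟨bot_le, le_rfl⟩ hx.2).trans hb⟩

theorem mapsTo_A2_right (ha : a ≤ A.A2 a a) : MapsTo (A.A2 a) (Icc a ⊤) (Icc a ⊤) :=
  fun _ hx => ⟨ha.trans (A.monotoneOn_A2_right a ⟨le_rfl, le_top⟩ hx hx.1), le_top⟩

theorem cdown_eq_sInf_prefixedPoints (hb : A.A1 b b ≤ b) :
    A.cdown b = sInf {z ∈ Icc ⊥ b | A.A1 z b ≤ z} := by
  rw [← sInf_fixedPoints_Icc_eq (A.monotoneOn_A1_left b) (A.mapsTo_A1_left hb) bot_le]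
  simp only [cdown, mem_Icc, bot_le, true_and]

theorem cup_eq_sInf_prefixedPoints (ha : a ≤ A.A2 a a) :
    A.cup a = sInf {z ∈ Icc a ⊤ | A.A2 a z ≤ z} := by
  rw [← sInf_fixedPoints_Icc_eq (A.monotoneOn_A2_right a) (A.mapsTo_A2_right ha) le_top]
  simp only [cup, mem_Icc, le_top, and_true]

theorem A1_cdown (hb : A.A1 b b ≤ b) : A.A1 (A.cdown b) b = A.cdown b := by
  rw [A.cdown_eq_sInf_prefixedPoints hb]
  exact (sInf_prefixedPoints_Icc_spec (A.monotoneOn_A1_left b) (A.mapsTo_A1_left hb) bot_le).2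

theorem A2_cup (ha : a ≤ A.A2 a a) : A.A2 a (A.cup a) = A.cup a := by
  rw [A.cup_eq_sInf_prefixedPoints ha]
  exact (sInf_prefixedPoints_Icc_spec (A.monotoneOn_A2_right a) (A.mapsTo_A2_right ha) le_top).2

theorem cdown_le_of_prefixed (hb : A.A1 b b ≤ b) (hzb : z ≤ b) (hz : A.A1 z b ≤ z) :
    A.cdown b ≤ z := by
  rw [A.cdown_eq_sInf_prefixedPoints hb]
  exact sInf_le ⟨⟨bot_le, hzb⟩, hz⟩

theorem cup_le_of_prefixed (ha : a ≤ A.A2 a a) (haz : a ≤ z) (hz : A.A2 a z ≤ z) :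
    A.cup a ≤ z := by
  rw [A.cup_eq_sInf_prefixedPoints ha]
  exact sInf_le ⟨⟨haz, le_top⟩, hz⟩

theorem cdown_le (hb : A.A1 b b ≤ b) : A.cdown b ≤ b :=
  A.cdown_le_of_prefixed hb le_rfl hb

theorem le_cup (a : L) : a ≤ A.cup a :=
  le_sInf fun _ hz => hz.1

theorem cdown_le_cdown (hb : A.A1 b b ≤ b) (hdb : d ≤ b) : A.cdown b ≤ A.cdown d :=
  le_sInf fun z ⟨hzd, hz⟩ => A.cdown_le_of_prefixed hb (hzd.trans hdb)
    ((A.mono1 z b z d (hzd.trans hdb) hzd le_rfl hdb).trans hz.le)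

variable {A}

theorem reliable.A1_diag_le (h : A.reliable a b) : A.A1 b b ≤ b :=
  calc A.A1 b b = A.A2 b b := A.diag b
    _ ≤ A.A2 a b := A.mono2 a b b b h.1 le_rfl h.1 le_rfl
    _ ≤ b := h.2.2

theorem reliable.le_A2_diag (h : A.reliable a b) : a ≤ A.A2 a a :=
  calc a ≤ A.A1 a b := h.2.1
    _ ≤ A.A1 a a := A.mono1 a b a a h.1 le_rfl le_rfl h.1
    _ ≤ A.A2 a a := A.cons a a le_rfl

end PartialApprox

theorem stmt7 (A : PartialApprox L) (a b : L) (h : A.prudent a b) :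
    A.prudent (A.cdown b) (A.cup a) := by
  obtain ⟨hr, hac⟩ := h
  have hb := hr.A1_diag_le
  have ha := hr.le_A2_diag
  set c := A.cdown b
  set d := A.cup a
  have had : a ≤ d := A.le_cup a
  have hdb : d ≤ b := A.cup_le_of_prefixed ha hr.1 hr.2.2
  have hcb : c ≤ b := A.cdown_le hb
  have hcd : c ≤ d := A.cdown_le_of_prefixed hb hdb <|
    calc A.A1 d b ≤ A.A1 d d := A.mono1 d b d d hdb le_rfl le_rfl hdb
      _ = A.A2 d d := A.diag d
      _ ≤ A.A2 a d := A.mono2 a d d d had le_rfl had le_rfl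
      _ = d := A.A2_cup ha
  refine ⟨⟨hcd, ?_, ?_⟩, A.cdown_le_cdown hb hdb⟩
  · calc c = A.A1 c b := (A.A1_cdown hb).symm
      _ ≤ A.A1 c d := A.mono1 c b c d hcb hcd le_rfl hdb
  · calc A.A2 c d ≤ A.A2 a d := A.mono2 a d c d had hcd hac le_rfl
      _ = d := A.A2_cup ha
end

section
/- For an A-prudent pair (a,b), the stable revision is at least as precise as the direct revision: A(a,b) ≤_p (c↓(b), c↑(a)), i.e., A^1(a,b) ≤ c↓(b) and c↑(a) ≤ A^2(a,b). -/
variable {L : Type*} [CompleteLattice L]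

/-!
The first inequality needs only `a ≤ c↓(b)`: since `A¹(·, b)` is monotone, `A¹(a, b)` lies below
every fixpoint of `A¹(·, b)` that lies above `a`, hence below their infimum `c↓(b)`.
For the second, reliability makes `A²(a, ·)` a monotone self-map of the interval `[a, A²(a, b)]`,
so by Knaster–Tarski it has a fixpoint there, and `c↑(a)` lies below it.
-/

open Set

theorem exists_fixed_mem_Icc_of_mapsTo {α : Type*} [CompleteLattice α] {f : α → α} {a c : α}
    (hac : a ≤ c) (hf : MonotoneOn f (Icc a c)) (hmaps : MapsTo f (Icc a c) (Icc a c)) :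
    ∃ z ∈ Icc a c, f z = z := by
  have : Fact (a ≤ c) := ⟨hac⟩
  let g : Icc a c →o Icc a c := ⟨fun z => ⟨f z, hmaps z.2⟩, fun x y hxy => hf x.2 y.2 hxy⟩
  exact ⟨g.lfp, g.lfp.2, congrArg Subtype.val g.map_lfp⟩

namespace PartialApprox

variable (A : PartialApprox L) {a b : L}

theorem A1_le_cdown (hab : a ≤ b) (ha : a ≤ A.cdown b) : A.A1 a b ≤ A.cdown b :=
  le_sInf fun z hz =>
    hz.2 ▸ A.mono1 a b z b hab hz.1 (ha.trans (sInf_le hz)) le_rfl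

theorem A2_le_A2_right {z z' : L} (haz : a ≤ z) (hzz' : z ≤ z') : A.A2 a z ≤ A.A2 a z' :=
  A.mono2 a z' a z (haz.trans hzz') haz le_rfl hzz'

theorem cup_le_of_fixed {z : L} (haz : a ≤ z) (hz : A.A2 a z = z) : A.cup a ≤ z :=
  sInf_le ⟨haz, hz⟩

theorem mapsTo_A2_Icc (h : A.reliable a b) :
    MapsTo (A.A2 a) (Icc a (A.A2 a b)) (Icc a (A.A2 a b)) := by
  obtain ⟨hab, haA1, hA2b⟩ := h
  intro z ⟨haz, hzA2⟩
  have hzb : z ≤ b := hzA2.trans hA2b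
  constructor
  · calc a ≤ A.A1 a b := haA1
      _ ≤ A.A1 a z := A.mono1 a b a z hab haz le_rfl hzb
      _ ≤ A.A2 a z := A.cons a z haz
  · calc A.A2 a z ≤ A.A2 a (A.A2 a b) := A.A2_le_A2_right haz hzA2
      _ ≤ A.A2 a b := A.A2_le_A2_right (haz.trans hzA2) hA2b

theorem cup_le_A2 (h : A.reliable a b) : A.cup a ≤ A.A2 a b := by
  have ha : a ≤ A.A2 a b := h.2.1.trans (A.cons a b h.1)
  obtain ⟨z, ⟨haz, hzA2⟩, hz⟩ := exists_fixed_mem_Icc_of_mapsTo ha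
    (fun _ hx _ _ hxy => A.A2_le_A2_right hx.1 hxy) (A.mapsTo_A2_Icc h)
  exact (A.cup_le_of_fixed haz hz).trans hzA2

end PartialApprox

theorem stmt8 (A : PartialApprox L) (a b : L) (h : A.prudent a b) :
    A.A1 a b ≤ A.cdown b ∧ A.cup a ≤ A.A2 a b :=
  ⟨A.A1_le_cdown h.1.1 h.2, A.cup_le_A2 h.1⟩
end

section
/- Let A be a partial approximation operator on L^c and {(a^α, b^α)}_α a chain of A-prudent pairs. Then its least upper bound (lub({a^α}), glb({b^α})) in (L^c, ≤_p) is A-prudent. -/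
variable {L : Type*} [CompleteLattice L]

/-!
Consistency and reliability of the limit follow from the chain condition and the
`≤ₚ`-monotonicity of `A`. For prudence, `c↓` is antitone: a fixpoint `z ≤ b'` of
`A¹(·, b')` is a pre-fixpoint of `A¹(·, b)` when `b' ≤ b`, so Knaster–Tarski on `[⊥, z]`
yields a fixpoint of `A¹(·, b)` below `z`.
-/

open Set

theorem exists_fixedPoint_le_of_monotoneOn {α : Type*} [CompleteLattice α] {f : α → α} {z : α}
    (hf : MonotoneOn f (Iic z)) (hz : f z ≤ z) : ∃ w ≤ z, f w = w := by
  set w := sInf {u | u ≤ z ∧ f u ≤ u}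
  have hwz : w ≤ z := sInf_le ⟨le_rfl, hz⟩
  have hfw : f w ≤ w := le_sInf fun u ⟨huz, hfu⟩ => (hf hwz huz (sInf_le ⟨huz, hfu⟩)).trans hfu
  have hffw : f (f w) ≤ f w := hf (hfw.trans hwz) hwz hfw
  exact ⟨w, hwz, hfw.antisymm (sInf_le ⟨hfw.trans hwz, hffw⟩)⟩

theorem IsChain.fst_le_snd_of_precLE {S : Set (L × L)} (hchain : IsChain precLE S)
    (hcons : ∀ p ∈ S, p.1 ≤ p.2) {p q : L × L} (hp : p ∈ S) (hq : q ∈ S) : p.1 ≤ q.2 := by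
  rcases eq_or_ne p q with rfl | hne
  · exact hcons p hp
  · rcases hchain hp hq hne with ⟨h1, -⟩ | ⟨-, h2⟩
    · exact h1.trans (hcons q hq)
    · exact (hcons p hp).trans h2

theorem IsChain.sSup_fst_le_sInf_snd {S : Set (L × L)} (hchain : IsChain precLE S)
    (hcons : ∀ p ∈ S, p.1 ≤ p.2) : sSup (Prod.fst '' S) ≤ sInf (Prod.snd '' S) :=
  sSup_le <| forall_mem_image.2 fun _ hp =>
    le_sInf <| forall_mem_image.2 fun _ hq => hchain.fst_le_snd_of_precLE hcons hp hq

namespace PartialApprox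

theorem cdown_antitone (A : PartialApprox L) {b b' : L} (h : b' ≤ b) :
    A.cdown b ≤ A.cdown b' := by
  refine le_sInf fun z ⟨hzb', hz⟩ => ?_
  have hzb : z ≤ b := hzb'.trans h
  obtain ⟨w, hwz, hw⟩ := exists_fixedPoint_le_of_monotoneOn (f := (A.A1 · b))
    (fun u hu v hv huv => A.mono1 u b v b (hu.trans hzb) (hv.trans hzb) huv le_rfl)
    ((A.mono1 z b z b' hzb hzb' le_rfl h).trans hz.le)
  exact (sInf_le (show w ∈ {u | u ≤ b ∧ A.A1 u b = u} from ⟨hwz.trans hzb, hw⟩)).trans hwz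

end PartialApprox

theorem stmt11 (A : PartialApprox L) (S : Set (L × L))
    (hchain : IsChain precLE S) (hpr : ∀ p ∈ S, A.prudent p.1 p.2) :
    A.prudent (sSup (Prod.fst '' S)) (sInf (Prod.snd '' S)) := by
  set a := sSup (Prod.fst '' S)
  set b := sInf (Prod.snd '' S)
  have hfst : ∀ p ∈ S, p.1 ≤ a := fun p hp => le_sSup ⟨p, hp, rfl⟩
  have hsnd : ∀ p ∈ S, b ≤ p.2 := fun p hp => sInf_le ⟨p, hp, rfl⟩
  have hab : a ≤ b := hchain.sSup_fst_le_sInf_snd fun p hp => (hpr p hp).1.1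
  refine ⟨⟨hab, sSup_le ?_, le_sInf ?_⟩, sSup_le ?_⟩ <;> rintro _ ⟨p, hp, rfl⟩
  · obtain ⟨⟨hcons, hle, -⟩, -⟩ := hpr p hp
    exact hle.trans (A.mono1 p.1 p.2 a b hcons hab (hfst p hp) (hsnd p hp))
  · obtain ⟨⟨hcons, -, hle⟩, -⟩ := hpr p hp
    exact (A.mono2 p.1 p.2 a b hcons hab (hfst p hp) (hsnd p hp)).trans hle
  · exact (hpr p hp).2.trans (A.cdown_antitone (hsnd p hp))
end

section
/- Let O be an operator on a complete lattice L and A, B partial approximations of O with A ≤_p B. If x ∈ L is an A-stable fixpoint of O (i.e., (x,x) is a stable fixpoint of A), then x is a B-stable fixpoint of O. -/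
variable {L : Type*} [CompleteLattice L]

/-! The chain `x = A₁(x,x) ≤ B₁(x,x) = B₂(x,x) ≤ A₂(x,x) = x` makes `(x, x)` a fixpoint of `B`.
A fixpoint of `B.A1 (·, x)` below `x` is a prefixpoint of the less precise `A.A1 (·, x)`, so by
the Knaster–Tarski argument it lies above the least fixpoint of `A.A1 (·, x)`, which is `x`. -/

namespace PartialApprox

variable (A : PartialApprox L)

theorem A1_self_eq_of_reliable {x : L} (h : A.reliable x x) : A.A1 x x = x :=
  le_antisymm (A.diag x ▸ h.2.2) h.2.1

theorem reliable_self_of_A1_eq {x : L} (h : A.A1 x x = x) : A.reliable x x :=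
  ⟨le_rfl, h.ge, (A.diag x ▸ h).le⟩

theorem cdown_le_self {b : L} (h : A.A1 b b = b) : A.cdown b ≤ b :=
  sInf_le ⟨le_rfl, h⟩

theorem cup_eq_self {a : L} (h : A.A2 a a = a) : A.cup a = a :=
  le_antisymm (sInf_le ⟨le_rfl, h⟩) (le_sInf fun _ hz => hz.1)

theorem cdown_le_of_A1_le_s16 {b z : L} (hzb : z ≤ b) (hz : A.A1 z b ≤ z) : A.cdown b ≤ z := by
  set m := sInf {u | u ≤ b ∧ A.A1 u b ≤ u}
  have hmz : m ≤ z := sInf_le ⟨hzb, hz⟩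
  have hmb : m ≤ b := hmz.trans hzb
  have hpre : A.A1 m b ≤ m :=
    le_sInf fun u hu => (A.mono1 m b u b hmb hu.1 (sInf_le hu) le_rfl).trans hu.2
  have hfix : A.A1 m b = m :=
    le_antisymm hpre <| sInf_le ⟨hpre.trans hmb, A.mono1 _ b m b (hpre.trans hmb) hmb hpre le_rfl⟩
  exact (sInf_le ⟨hmb, hfix⟩ : A.cdown b ≤ m).trans hmz

theorem cdown_mono {B : PartialApprox L} {b : L} (hAB : ∀ z, z ≤ b → A.A1 z b ≤ B.A1 z b) :
    A.cdown b ≤ B.cdown b :=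
  le_sInf fun z hz => A.cdown_le_of_A1_le_s16 hz.1 ((hAB z hz.1).trans hz.2.le)

end PartialApprox

theorem stmt16_general (A B : PartialApprox L)
    (hAB : ∀ x y : L, x ≤ y → A.A1 x y ≤ B.A1 x y ∧ B.A2 x y ≤ A.A2 x y)
    (x : L) (h : A.stableFix x x) :
    B.stableFix x x := by
  obtain ⟨hrel, hcdown, -⟩ := h
  have hA : A.A1 x x = x := A.A1_self_eq_of_reliable hrel
  have hB : B.A1 x x = x := by
    refine le_antisymm ?_ (hA.ge.trans (hAB x x le_rfl).1)
    calc B.A1 x x = B.A2 x x := B.diag x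
      _ ≤ A.A2 x x := (hAB x x le_rfl).2
      _ = x := (A.diag x).symm.trans hA
  have hcdownB : x = B.cdown x :=
    le_antisymm (hcdown.trans_le (A.cdown_mono fun z hz => (hAB z x hz).1)) (B.cdown_le_self hB)
  exact ⟨B.reliable_self_of_A1_eq hB, hcdownB, (B.cup_eq_self (B.diag x ▸ hB)).symm⟩

theorem stmt16 (O : L → L) (A B : PartialApprox L)
    (hAO : ∀ x : L, A.A1 x x = O x) (hBO : ∀ x : L, B.A1 x x = O x)
    (hAB : ∀ x y : L, x ≤ y → A.A1 x y ≤ B.A1 x y ∧ B.A2 x y ≤ A.A2 x y)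
    (x : L) (h : A.stableFix x x) :
    B.stableFix x x :=
  stmt16_general A B hAB x h
end

section
/- Let O be an operator on a complete lattice L. Define U_O on consistent pairs by U_O(x,y) = (glb(O([x,y])), lub(O([x,y]))), where O([x,y]) = {O(z) : x ≤ z ≤ y}. Then U_O is a partial approximation of O and is the greatest element (with respect to pointwise ≤_p) among all partial approximations of O. -/
/-!
For `x ≤ z ≤ y` we have `(x, y) ≤ₚ (z, z)`, so any partial approximation `B` of `O` satisfies
`B(x, y) ≤ₚ B(z, z) = (O z, O z)`: its components are a lower and an upper bound of `O([x, y])`,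
hence `B(x, y) ≤ₚ (glb O([x, y]), lub O([x, y]))`. The properties of `U_O` itself follow from
`O([x', y']) ⊆ O([x, y])` for `[x', y'] ⊆ [x, y]` and `O([x, x]) = {O x}`.
-/

variable {L : Type*} [CompleteLattice L]

namespace PartialApprox

theorem A1_le_A1_diag (A : PartialApprox L) {x y z : L} (hxz : x ≤ z) (hzy : z ≤ y) :
    A.A1 x y ≤ A.A1 z z :=
  A.mono1 x y z z (hxz.trans hzy) le_rfl hxz hzy

theorem A1_diag_le_A2 (A : PartialApprox L) {x y z : L} (hxz : x ≤ z) (hzy : z ≤ y) :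
    A.A1 z z ≤ A.A2 x y :=
  A.diag z ▸ A.mono2 x y z z (hxz.trans hzy) le_rfl hxz hzy

end PartialApprox

theorem stmt17 (O : L → L) :
    (∀ x y : L, x ≤ y → sInf (O '' Set.Icc x y) ≤ sSup (O '' Set.Icc x y)) ∧
    (∀ x y x' y' : L, x ≤ y → x' ≤ y' → x ≤ x' → y' ≤ y →
      sInf (O '' Set.Icc x y) ≤ sInf (O '' Set.Icc x' y') ∧
      sSup (O '' Set.Icc x' y') ≤ sSup (O '' Set.Icc x y)) ∧
    (∀ x : L, sInf (O '' Set.Icc x x) = O x ∧ sSup (O '' Set.Icc x x) = O x) ∧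
    (∀ B : PartialApprox L, (∀ x : L, B.A1 x x = O x) →
      ∀ x y : L, x ≤ y → B.A1 x y ≤ sInf (O '' Set.Icc x y) ∧
        sSup (O '' Set.Icc x y) ≤ B.A2 x y) := by
  refine ⟨fun x y hxy => sInf_le_sSup ((Set.nonempty_Icc.2 hxy).image O), ?_, ?_, ?_⟩
  · intro x y x' y' _ _ hx hy
    have hsub : O '' Set.Icc x' y' ⊆ O '' Set.Icc x y :=
      Set.image_mono (Set.Icc_subset_Icc hx hy)
    exact ⟨sInf_le_sInf hsub, sSup_le_sSup hsub⟩
  · intro x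
    simp only [Set.Icc_self, Set.image_singleton, sInf_singleton, sSup_singleton, and_self]
  · rintro B hB x y -
    constructor
    · refine le_sInf ?_
      rintro _ ⟨z, ⟨hxz, hzy⟩, rfl⟩
      exact hB z ▸ B.A1_le_A1_diag hxz hzy
    · refine sSup_le ?_
      rintro _ ⟨z, ⟨hxz, hzy⟩, rfl⟩
      exact hB z ▸ B.A1_diag_le_A2 hxz hzy
end

section
/- If O is a monotone operator on a complete lattice L, then the pair (lfp(O), lfp(O)) is a stable fixpoint of the ultimate approximation U_O, and it is the unique exact stable fixpoint: x ∈ L is an ultimate stable fixpoint of O if and only if x = lfp(O). -/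
variable {L : Type*} [CompleteLattice L]

/- For monotone `O` the ultimate approximation is `U(x, y) = (O x, O y)`, so a diagonal pair
`(x, x)` is reliable exactly when `x` is a fixpoint of `O`, and `c↓(y)` is the least fixpoint of
`O` below `y`. Hence `c↓(x) = lfp O` for every fixpoint `x`, and `c↑(lfp O) = lfp O` because
`lfp O` is itself admissible in the defining infimum. -/

namespace PartialApprox

def IsUltimate (U : PartialApprox L) (O : L → L) : Prop :=
  ∀ x y : L, x ≤ y →
    U.A1 x y = sInf (O '' Set.Icc x y) ∧ U.A2 x y = sSup (O '' Set.Icc x y)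

variable {U : PartialApprox L} {f : L →o L}

theorem IsUltimate.A1_eq (hU : U.IsUltimate f) {x y : L} (hxy : x ≤ y) : U.A1 x y = f x :=
  (hU x y hxy).1.trans (f.monotone.monotoneOn _ |>.sInf_image_Icc hxy)

theorem IsUltimate.A2_eq (hU : U.IsUltimate f) {x y : L} (hxy : x ≤ y) : U.A2 x y = f y :=
  (hU x y hxy).2.trans (f.monotone.monotoneOn _ |>.sSup_image_Icc hxy)

theorem IsUltimate.reliable_self_iff (hU : U.IsUltimate f) {x : L} :
    U.reliable x x ↔ f x = x := by
  simp only [reliable, hU.A1_eq le_rfl, hU.A2_eq le_rfl, le_rfl, true_and]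
  exact ⟨fun h => le_antisymm h.2 h.1, fun h => ⟨h.ge, h.le⟩⟩

theorem IsUltimate.cdown_eq_lfp (hU : U.IsUltimate f) {y : L} (hy : f.lfp ≤ y) :
    U.cdown y = f.lfp := by
  refine le_antisymm (sInf_le ⟨hy, by rw [hU.A1_eq hy, f.map_lfp]⟩) (le_sInf ?_)
  rintro z ⟨hzy, hz⟩
  exact f.lfp_le_fixed ((hU.A1_eq hzy).symm.trans hz)

theorem IsUltimate.cup_eq_self (hU : U.IsUltimate f) {x : L} (hx : f x = x) : U.cup x = x :=
  le_antisymm (sInf_le ⟨le_rfl, (hU.A2_eq le_rfl).trans hx⟩) (le_sInf fun _ hz => hz.1)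

theorem IsUltimate.stableFix_self_iff (hU : U.IsUltimate f) {x : L} :
    U.stableFix x x ↔ x = f.lfp := by
  constructor
  · rintro ⟨hrel, hcdown, -⟩
    have hfix := hU.reliable_self_iff.mp hrel
    exact hcdown.trans (hU.cdown_eq_lfp (f.lfp_le_fixed hfix))
  · rintro rfl
    exact ⟨hU.reliable_self_iff.mpr f.map_lfp, (hU.cdown_eq_lfp le_rfl).symm,
      (hU.cup_eq_self f.map_lfp).symm⟩

end PartialApprox

theorem stmt19 (O : L → L) (hO : Monotone O) (U : PartialApprox L)
    (hU : ∀ x y : L, x ≤ y →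
      U.A1 x y = sInf (O '' Set.Icc x y) ∧ U.A2 x y = sSup (O '' Set.Icc x y)) :
    U.stableFix (sInf {x : L | O x ≤ x}) (sInf {x : L | O x ≤ x}) ∧
    (∀ x : L, U.stableFix x x ↔ x = sInf {x : L | O x ≤ x}) := by
  -- `OrderHom.lfp` is defined as `sInf {a | f a ≤ a}`, so the identifications below are `rfl`.
  have hstable : ∀ x : L, U.stableFix x x ↔ x = (⟨O, hO⟩ : L →o L).lfp :=
    fun _ => PartialApprox.IsUltimate.stableFix_self_iff (f := ⟨O, hO⟩) hU
  exact ⟨(hstable _).mpr rfl, hstable⟩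
end
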